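/- Suppose for each k the function f_{k+1}(t,x,v) is given by the iteration f_{k+1}(t,x,v) = c₀ χ₁(x − t v) χ₂(v) + χ₂(v) G[f_k](t,x,v), where G[f](t,x,v) depends on f only through values f(τ, x − (t−τ)v, ζ) with 0 ≤ τ ≤ t and |ζ| ≤ c₂, and f₀ = 0. If χ₁ is the characteristic function of {|x| ≤ c₁} and χ₂ of {|v| ≤ c₂}, and G commutes with spatial translations in its argument, then for every k and every t ∈ [0,T] with T c₂ < c₁: for all |x|, |y| ≤ c₁ − t c₂ and all v, f_k(t,x,v) = f_k(t,y,v). -/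

import Mathlib

/-!
Along a backward characteristic `τ ↦ x - (t - τ) v` with `|v| ≤ c₂` the shrinking ball
`|x| ≤ c₁ - t c₂` is carried into the ball `|x| ≤ c₁ - τ c₂`. Hence, by induction on `k`,
the free-streaming term `χ₁(x - t v)` is identically `1` on the ball wherever `χ₂(v) ≠ 0`,
and `G[f_k]` only samples `f_k` where it is already independent of `x`.
-/

noncomputable abbrev E3 := EuclideanSpace ℝ (Fin 3)

section Cone

variable {E : Type*} [NormedAddCommGroup E] [NormedSpace ℝ E]

lemma norm_sub_smul_le_of_add_mul_le {z v : E} {s c r : ℝ} (hs : 0 ≤ s) (hv : ‖v‖ ≤ c)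
    (hz : ‖z‖ + s * c ≤ r) : ‖z - s • v‖ ≤ r :=
  calc ‖z - s • v‖ ≤ ‖z‖ + ‖s • v‖ := norm_sub_le _ _
    _ = ‖z‖ + s * ‖v‖ := by rw [norm_smul, Real.norm_of_nonneg hs]
    _ ≤ ‖z‖ + s * c := by gcongr
    _ ≤ r := hz

def IsHomogeneousOnCone (c₁ c₂ : ℝ) (g : ℝ → E → E → ℝ) (t : ℝ) : Prop :=
  ∀ x y v : E, ‖x‖ ≤ c₁ - t * c₂ → ‖y‖ ≤ c₁ - t * c₂ → g t x v = g t y v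

lemma norm_sub_smul_le_of_mem_cone {z v : E} {c₁ c₂ t τ : ℝ} (hτ : τ ≤ t) (hv : ‖v‖ ≤ c₂)
    (hz : ‖z‖ ≤ c₁ - t * c₂) : ‖z - (t - τ) • v‖ ≤ c₁ - τ * c₂ :=
  norm_sub_smul_le_of_add_mul_le (sub_nonneg.mpr hτ) hv (by linarith)

lemma sub_smul_mem_closedBall_of_mem_cone {z v : E} {c₁ c₂ t : ℝ} (ht : 0 ≤ t)
    (hv : ‖v‖ ≤ c₂) (hz : ‖z‖ ≤ c₁ - t * c₂) : z - t • v ∈ Metric.closedBall (0 : E) c₁ :=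
  mem_closedBall_zero_iff.mpr (norm_sub_smul_le_of_add_mul_le ht hv (by linarith))

def DependsOnlyOnCharacteristics (c₂ : ℝ) (G : (ℝ → E → E → ℝ) → (ℝ → E → E → ℝ)) : Prop :=
  ∀ (f : ℝ → E → E → ℝ) (t : ℝ) (x y v : E),
    (∀ τ ∈ Set.Icc (0:ℝ) t, ∀ ζ : E, ‖ζ‖ ≤ c₂ →
      f τ (x - (t - τ) • v) ζ = f τ (y - (t - τ) • v) ζ) →
    G f t x v = G f t y v

variable {c₁ c₂ : ℝ} {G : (ℝ → E → E → ℝ) → (ℝ → E → E → ℝ)}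

lemma gain_eq_of_forall_isHomogeneousOnCone
    (hG : DependsOnlyOnCharacteristics c₂ G)
    {f : ℝ → E → E → ℝ} {t : ℝ} (hf : ∀ τ ∈ Set.Icc (0:ℝ) t, IsHomogeneousOnCone c₁ c₂ f τ)
    {x y v : E} (hv : ‖v‖ ≤ c₂) (hx : ‖x‖ ≤ c₁ - t * c₂) (hy : ‖y‖ ≤ c₁ - t * c₂) :
    G f t x v = G f t y v :=
  hG f t x y v fun τ hτ ζ _ ↦ hf τ hτ _ _ ζ
    (norm_sub_smul_le_of_mem_cone hτ.2 hv hx) (norm_sub_smul_le_of_mem_cone hτ.2 hv hy)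

lemma isHomogeneousOnCone_iterate {c₀ : ℝ}
    (hG : DependsOnlyOnCharacteristics c₂ G)
    {f : ℕ → ℝ → E → E → ℝ} (hf0 : ∀ t x v, f 0 t x v = 0)
    (hiter : ∀ k t x v, f (k+1) t x v =
      c₀ * Set.indicator (Metric.closedBall (0:E) c₁) (fun _ => (1:ℝ)) (x - t • v) *
        Set.indicator (Metric.closedBall (0:E) c₂) (fun _ => (1:ℝ)) v +
      Set.indicator (Metric.closedBall (0:E) c₂) (fun _ => (1:ℝ)) v * G (f k) t x v)
    (k : ℕ) {t : ℝ} (ht : 0 ≤ t) : IsHomogeneousOnCone c₁ c₂ (f k) t := by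
  induction k generalizing t with
  | zero => intro x y v _ _; rw [hf0, hf0]
  | succ k ih =>
    intro x y v hx hy
    rw [hiter, hiter]
    by_cases hv : ‖v‖ ≤ c₂
    · rw [Set.indicator_of_mem (sub_smul_mem_closedBall_of_mem_cone ht hv hx),
        Set.indicator_of_mem (sub_smul_mem_closedBall_of_mem_cone ht hv hy),
        gain_eq_of_forall_isHomogeneousOnCone hG (fun τ hτ ↦ ih hτ.1) hv hx hy]
    · have hv' : v ∉ Metric.closedBall (0 : E) c₂ := by simpa using hv
      rw [Set.indicator_of_notMem hv']
      ring

end Cone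

theorem iterates_spatially_homogeneous_general (c₀ c₁ c₂ T : ℝ)
    (G : (ℝ → E3 → E3 → ℝ) → (ℝ → E3 → E3 → ℝ))
    (hG : ∀ (f : ℝ → E3 → E3 → ℝ) (t : ℝ) (x y v : E3),
      (∀ τ ∈ Set.Icc (0:ℝ) t, ∀ ζ : E3, ‖ζ‖ ≤ c₂ →
        f τ (x - (t - τ) • v) ζ = f τ (y - (t - τ) • v) ζ) →
      G f t x v = G f t y v)
    (f : ℕ → ℝ → E3 → E3 → ℝ)
    (hf0 : ∀ t x v, f 0 t x v = 0)
    (hiter : ∀ k t x v, f (k+1) t x v =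
      c₀ * Set.indicator (Metric.closedBall (0:E3) c₁) (fun _ => (1:ℝ)) (x - t • v) *
        Set.indicator (Metric.closedBall (0:E3) c₂) (fun _ => (1:ℝ)) v +
      Set.indicator (Metric.closedBall (0:E3) c₂) (fun _ => (1:ℝ)) v * G (f k) t x v) :
    ∀ k, ∀ t ∈ Set.Icc (0:ℝ) T, ∀ x y v : E3,
      ‖x‖ ≤ c₁ - t * c₂ → ‖y‖ ≤ c₁ - t * c₂ → f k t x v = f k t y v :=
  fun k _ ht ↦ isHomogeneousOnCone_iterate hG hf0 hiter k ht.1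

/-- Lemma 5 (abstract form): for the Kaniel–Shinbrot iteration
`f_{k+1}(t,x,v) = c₀ χ₁(x - t v) χ₂(v) + χ₂(v) G[f_k](t,x,v)`, with `f₀ = 0`,
where `G` depends on its argument only through values along backward
characteristics with truncated velocities and is translation invariant in `x`,
each iterate is independent of `x` on the shrinking ball `|x| ≤ c₁ - t c₂`. -/
theorem iterates_spatially_homogeneous (c₀ c₁ c₂ T : ℝ)
    (hc₀ : 0 < c₀) (hc₁ : 0 < c₁) (hc₂ : 0 < c₂) (hT : 0 < T)
    (hTc : T * c₂ < c₁)
    (G : (ℝ → E3 → E3 → ℝ) → (ℝ → E3 → E3 → ℝ))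
    (hG : ∀ (f : ℝ → E3 → E3 → ℝ) (t : ℝ) (x y v : E3),
      (∀ τ ∈ Set.Icc (0:ℝ) t, ∀ ζ : E3, ‖ζ‖ ≤ c₂ →
        f τ (x - (t - τ) • v) ζ = f τ (y - (t - τ) • v) ζ) →
      G f t x v = G f t y v)
    (f : ℕ → ℝ → E3 → E3 → ℝ)
    (hf0 : ∀ t x v, f 0 t x v = 0)
    (hiter : ∀ k t x v, f (k+1) t x v =
      c₀ * Set.indicator (Metric.closedBall (0:E3) c₁) (fun _ => (1:ℝ)) (x - t • v) *
        Set.indicator (Metric.closedBall (0:E3) c₂) (fun _ => (1:ℝ)) v +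
      Set.indicator (Metric.closedBall (0:E3) c₂) (fun _ => (1:ℝ)) v * G (f k) t x v) :
    ∀ k, ∀ t ∈ Set.Icc (0:ℝ) T, ∀ x y v : E3,
      ‖x‖ ≤ c₁ - t * c₂ → ‖y‖ ≤ c₁ - t * c₂ → f k t x v = f k t y v :=
  iterates_spatially_homogeneous_general c₀ c₁ c₂ T G hG f hf0 hiter
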